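/- arXiv:1306.4872 — 2 statements merged into one kernel-verified Lean document; each statement's English description precedes it below -/
import Mathlib

section
/- Let A < B be real numbers and let Ψ₀,…,Ψ_{k−1} : [A,B] → ℝ be a Chebyshev system. If σ₁ and σ₂ are two finitely supported nonnegative measures on [A,B] such that the union of their supports contains at most k points and ∫_A^B Ψ_i dσ₁ = ∫_A^B Ψ_i dσ₂ for all i = 0,…,k−1, then σ₁ = σ₂. -/
open MeasureTheory Set

/-- A family of functions `Ψ₀, …, Ψ_{k-1}` is a Chebyshev system on `[A,B]` if for all
points `A ≤ x₀ < x₁ < ⋯ < x_{k-1} ≤ B` the matrix `(Ψ i (x j))` has positive determinant. -/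
def IsChebyshevSystem (A B : ℝ) {k : ℕ} (Ψ : Fin k → ℝ → ℝ) : Prop :=
  ∀ x : Fin k → ℝ, StrictMono x → (∀ j, x j ∈ Set.Icc A B) →
    0 < (Matrix.of fun i j : Fin k => Ψ i (x j)).det

/-- `σ` is a finitely supported nonnegative measure on `[A,B]`, supported exactly on the
finite set `s ⊆ [A,B]`, i.e. `σ = ∑_{x ∈ s} a_x δ_x` with positive finite weights. -/
def IsAtomicMeasureOn (A B : ℝ) (σ : Measure ℝ) (s : Finset ℝ) : Prop :=
  ↑s ⊆ Set.Icc A B ∧ (∀ x ∈ s, 0 < σ {x} ∧ σ {x} < ⊤) ∧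
    σ = ∑ x ∈ s, σ {x} • Measure.dirac x

open Finset

/-!
The difference `σ₁ - σ₂` is a signed combination `∑ c_x δ_x` over the at most `k` points of
`s₁ ∪ s₂`, and equal moments say that `∑ c_x Ψ_i(x) = 0` for every `i`. Since `[A,B]` is
infinite, these points can be completed to `k` points `x₀ < ⋯ < x_{k-1}` of `[A,B]`; the
Chebyshev matrix `(Ψ_i(x_j))` is then invertible, so every `c_x` vanishes.
-/

theorem Set.Infinite.exists_finset_superset_card_eq {α : Type*} {S : Set α} (hS : S.Infinite)
    {s : Finset α} (hs : ↑s ⊆ S) {k : ℕ} (hk : #s ≤ k) :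
    ∃ u : Finset α, s ⊆ u ∧ ↑u ⊆ S ∧ #u = k := by
  classical
  obtain ⟨t, htS, htcard⟩ := (hS.sdiff s.finite_toSet).exists_subset_card_eq (k - #s)
  have hdisj : Disjoint s t :=
    Finset.disjoint_left.mpr fun x hxs hxt => (htS hxt).2 hxs
  refine ⟨s ∪ t, Finset.subset_union_left, ?_, ?_⟩
  · rw [coe_union]
    exact union_subset hs fun x hx => (htS hx).1
  · rw [card_union_of_disjoint hdisj, htcard]
    omega

namespace IsChebyshevSystem

variable {A B : ℝ} {k : ℕ} {Ψ : Fin k → ℝ → ℝ}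

theorem eq_zero_of_sum_mul_eq_zero (hΨ : IsChebyshevSystem A B Ψ) {u : Finset ℝ}
    (hu : ↑u ⊆ Icc A B) (hcard : #u = k) {c : ℝ → ℝ} (hc : ∀ i, ∑ x ∈ u, c x * Ψ i x = 0) :
    ∀ x ∈ u, c x = 0 := by
  set e := u.orderEmbOfFin hcard
  have hdet : (Matrix.of fun i j : Fin k => Ψ i (e j)).det ≠ 0 :=
    (hΨ e e.strictMono fun j => hu (u.orderEmbOfFin_mem hcard j)).ne'
  have hce : (fun j => c (e j)) = 0 := by
    refine Matrix.eq_zero_of_mulVec_eq_zero hdet (funext fun i => ?_)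
    rw [Pi.zero_apply, ← hc i, ← u.map_orderEmbOfFin_univ hcard, sum_map]
    simp only [Matrix.mulVec, dotProduct, Matrix.of_apply, RelEmbedding.coe_toEmbedding, mul_comm]
    rfl
  intro x hx
  obtain ⟨j, rfl⟩ : x ∈ range e := by
    rw [u.range_orderEmbOfFin hcard]
    exact hx
  exact congrFun hce j

theorem eq_zero_of_sum_mul_eq_zero_of_card_le (hΨ : IsChebyshevSystem A B Ψ) (hAB : A < B)
    {s : Finset ℝ} (hs : ↑s ⊆ Icc A B) (hcard : #s ≤ k) {c : ℝ → ℝ}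
    (hc : ∀ i, ∑ x ∈ s, c x * Ψ i x = 0) :
    ∀ x ∈ s, c x = 0 := by
  obtain ⟨u, hsu, hu, hucard⟩ := (Icc_infinite hAB).exists_finset_superset_card_eq hs hcard
  have hc' : ∀ i, ∑ x ∈ u, (if x ∈ s then c x else 0) * Ψ i x = 0 := fun i => by
    simp only [ite_mul, zero_mul, sum_ite_mem, Finset.inter_eq_right.mpr hsu, hc i]
  intro x hx
  simpa [hx] using hΨ.eq_zero_of_sum_mul_eq_zero hu hucard hc' x (hsu hx)

end IsChebyshevSystem

namespace IsAtomicMeasureOn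

variable {A B : ℝ} {σ : Measure ℝ} {s : Finset ℝ}

theorem measure_singleton_eq_zero (hσ : IsAtomicMeasureOn A B σ s) {y : ℝ} (hy : y ∉ s) :
    σ {y} = 0 := by
  rw [hσ.2.2, Measure.finsetSum_apply]
  refine sum_eq_zero fun x hx => ?_
  have hxy : x ≠ y := fun h => hy (h ▸ hx)
  simp [hxy]

theorem measure_singleton_ne_top (hσ : IsAtomicMeasureOn A B σ s) (x : ℝ) : σ {x} ≠ ⊤ := by
  by_cases hx : x ∈ s
  · exact (hσ.2.1 x hx).2.ne
  · simp [hσ.measure_singleton_eq_zero hx]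

theorem eq_sum_dirac_of_subset (hσ : IsAtomicMeasureOn A B σ s) {t : Finset ℝ} (hst : s ⊆ t) :
    σ = ∑ x ∈ t, σ {x} • Measure.dirac x :=
  hσ.2.2.trans <| sum_subset hst fun x _ hx => by
    rw [hσ.measure_singleton_eq_zero hx, zero_smul]

theorem integral_eq_sum_of_subset (hσ : IsAtomicMeasureOn A B σ s) {t : Finset ℝ}
    (hst : s ⊆ t) (f : ℝ → ℝ) : ∫ x, f x ∂σ = ∑ x ∈ t, (σ {x}).toReal * f x := by
  have hint : ∀ x ∈ t, Integrable f ((σ {x}) • Measure.dirac x) := fun x _ =>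
    (integrable_dirac enorm_lt_top).smul_measure (hσ.measure_singleton_ne_top x)
  conv_lhs => rw [hσ.eq_sum_dirac_of_subset hst]
  rw [integral_finsetSum_measure hint]
  simp only [integral_smul_measure, integral_dirac, smul_eq_mul]

end IsAtomicMeasureOn

theorem unique_representation_of_few_atoms_general
    {k : ℕ} (A B : ℝ) (hAB : A < B) (Ψ : Fin k → ℝ → ℝ)
    (hCheb : IsChebyshevSystem A B Ψ)
    (σ₁ σ₂ : Measure ℝ) (s₁ s₂ : Finset ℝ)
    (h₁ : IsAtomicMeasureOn A B σ₁ s₁) (h₂ : IsAtomicMeasureOn A B σ₂ s₂)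
    (hcard : (s₁ ∪ s₂).card ≤ k)
    (hmom : ∀ i, ∫ x, Ψ i x ∂σ₁ = ∫ x, Ψ i x ∂σ₂) :
    σ₁ = σ₂ := by
  have hsub : ↑(s₁ ∪ s₂) ⊆ Icc A B := by
    rw [coe_union]
    exact union_subset h₁.1 h₂.1
  have hdiff : ∀ i, ∑ x ∈ s₁ ∪ s₂, ((σ₁ {x}).toReal - (σ₂ {x}).toReal) * Ψ i x = 0 := by
    intro i
    simp only [sub_mul, sum_sub_distrib,
      ← h₁.integral_eq_sum_of_subset subset_union_left,
      ← h₂.integral_eq_sum_of_subset subset_union_right, hmom, sub_self]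
  have hatoms := hCheb.eq_zero_of_sum_mul_eq_zero_of_card_le hAB hsub hcard hdiff
  rw [h₁.eq_sum_dirac_of_subset subset_union_left, h₂.eq_sum_dirac_of_subset subset_union_right]
  refine sum_congr rfl fun x hx => ?_
  rw [(ENNReal.toReal_eq_toReal_iff' (h₁.measure_singleton_ne_top x)
    (h₂.measure_singleton_ne_top x)).mp (sub_eq_zero.mp (hatoms x hx))]

/-- If `σ₁, σ₂` are finitely supported nonnegative measures on `[A,B]` whose supports
together contain at most `k` points, and they have the same moments with respect to a
Chebyshev system `Ψ₀, …, Ψ_{k-1}` on `[A,B]`, then `σ₁ = σ₂`. -/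
theorem unique_representation_of_few_atoms
    {k : ℕ} (A B : ℝ) (hAB : A < B) (Ψ : Fin k → ℝ → ℝ)
    (hcont : ∀ i, ContinuousOn (Ψ i) (Set.Icc A B))
    (hCheb : IsChebyshevSystem A B Ψ)
    (σ₁ σ₂ : Measure ℝ) (s₁ s₂ : Finset ℝ)
    (h₁ : IsAtomicMeasureOn A B σ₁ s₁) (h₂ : IsAtomicMeasureOn A B σ₂ s₂)
    (hcard : (s₁ ∪ s₂).card ≤ k)
    (hmom : ∀ i, ∫ x, Ψ i x ∂σ₁ = ∫ x, Ψ i x ∂σ₂) :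
    σ₁ = σ₂ :=
  unique_representation_of_few_atoms_general A B hAB Ψ hCheb σ₁ σ₂ s₁ s₂ h₁ h₂ hcard hmom
end

section
/- Let A < B, let Ψ₀,…,Ψ_{k−1} : [A,B] → ℝ be continuous functions forming a Chebyshev system, and let Ω : [A,B] → ℝ be continuous. Fix c⁰ ∈ ℝ^k such that the set S = { σ : σ finite nonnegative Borel measure on [A,B] with ∫_A^B Ψ_i dσ = c⁰_i for i = 0,…,k−1 } is nonempty. Then the set { ∫_A^B Ω dσ : σ ∈ S } ⊆ ℝ is a nonempty compact interval, i.e., of the form [γ⁻, γ⁺] for some real numbers γ⁻ ≤ γ⁺. -/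
open MeasureTheory Set

/-- `σ` belongs to the feasible set `S`: it is a finite nonnegative Borel measure
living on `[A,B]` whose moments with respect to `Ψ₀,…,Ψ_{k-1}` are `c₀,…,c_{k-1}`. -/
def IsFeasible (A B : ℝ) {k : ℕ} (Ψ : Fin k → ℝ → ℝ) (c : Fin k → ℝ)
    (σ : Measure ℝ) : Prop :=
  IsFiniteMeasure σ ∧ σ (Set.Icc A B)ᶜ = 0 ∧ ∀ i, ∫ x, Ψ i x ∂σ = c i

/-!
Let `φ x = (Ψ x, Ω x) ∈ ℝᵏ × ℝ` and let `K` be the convex hull of `φ '' [A, B]`, a compact convex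
set. A finite measure `σ` on `[A, B]` has `∫ φ dσ = σ([A, B]) • v` for some `v ∈ K` (the average
of `φ` lies in `K`), and conversely every `t • v` with `t ≥ 0`, `v ∈ K` is the `φ`-moment of a
finite combination of Dirac masses. So the set of values of `∫ Ω dσ` is the fibre over `c` of the
cone spanned by `K`, which is convex. By Cramer's rule, the Chebyshev property forbids a vanishing
nonnegative combination of at most `k + 1` vectors `Ψ xⱼ`, so `0 ∉ conv (Ψ '' [A, B])`: the first
coordinates of `K` are bounded away from `0`, the masses `t` in the fibre are bounded, and the
fibre is compact.
-/

open Finset Function Matrix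

-- Carathéodory's theorem, with the convex combinations padded by zero weights.
theorem convexHull_eq_image_stdSimplex {E : Type*} [AddCommGroup E] [Module ℝ E]
    [FiniteDimensional ℝ E] (s : Set E) :
    convexHull ℝ s =
      (fun p : (Fin (Module.finrank ℝ E + 1) → ℝ) × (Fin (Module.finrank ℝ E + 1) → E) =>
        ∑ j, p.1 j • p.2 j) '' (stdSimplex ℝ _ ×ˢ Set.univ.pi fun _ => s) := by
  refine Subset.antisymm (fun x hx => ?_) ?_
  · obtain ⟨p, hp⟩ : s.Nonempty := convexHull_nonempty_iff.1 ⟨x, hx⟩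
    obtain ⟨ι, _, z, w, hzs, hai, hw, hw1, rfl⟩ := eq_pos_convex_span_of_mem_convexHull hx
    obtain ⟨e⟩ : Nonempty (ι ↪ Fin (Module.finrank ℝ E + 1)) :=
      Embedding.nonempty_of_card_le <| by
        simpa using hai.card_le_finrank_succ.trans (Nat.succ_le_succ (Submodule.finrank_le _))
    refine ⟨(extend e w 0, extend e z fun _ => p), ⟨⟨fun j => ?_, ?_⟩, fun j _ => ?_⟩, ?_⟩
    · by_cases hj : j ∈ Set.range e
      · obtain ⟨i, rfl⟩ := hj
        simpa [e.injective.extend_apply] using (hw i).le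
      · simp [extend_apply' _ _ _ hj]
    · rw [← hw1]
      refine (Fintype.sum_of_injective e e.injective _ _ (fun j hj => ?_) fun i => ?_).symm
      · simp [extend_apply' _ _ _ hj]
      · simp [e.injective.extend_apply]
    · by_cases hj : j ∈ Set.range e
      · obtain ⟨i, rfl⟩ := hj
        simpa [e.injective.extend_apply] using hzs (Set.mem_range_self i)
      · simpa [extend_apply' _ _ _ hj] using hp
    · refine (Fintype.sum_of_injective e e.injective _ _ (fun j hj => ?_) fun i => ?_).symm
      · simp [extend_apply' _ _ _ hj]
      · simp [e.injective.extend_apply]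
  · rintro _ ⟨⟨u, q⟩, ⟨⟨hu0, hu1⟩, hq⟩, rfl⟩
    exact (convex_convexHull ℝ s).sum_mem (fun j _ => hu0 j) hu1
      fun j _ => subset_convexHull ℝ s (hq j trivial)

theorem IsCompact.convexHull {E : Type*} [NormedAddCommGroup E] [NormedSpace ℝ E]
    [FiniteDimensional ℝ E] {s : Set E} (hs : IsCompact s) : IsCompact (convexHull ℝ s) := by
  rw [convexHull_eq_image_stdSimplex]
  exact ((isCompact_stdSimplex ℝ _).prod (isCompact_univ_pi fun _ => hs)).image (by fun_prop)

section ConeFiber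

variable {E F : Type*}

def coneFiber [AddCommGroup E] [Module ℝ E] [AddCommGroup F] [Module ℝ F] (K : Set (E × F))
    (c : E) : Set F :=
  {y | ∃ t : ℝ, 0 ≤ t ∧ ∃ v ∈ K, t • v = (c, y)}

theorem Convex.coneFiber [AddCommGroup E] [Module ℝ E] [AddCommGroup F] [Module ℝ F]
    {K : Set (E × F)} (hK : Convex ℝ K) (c : E) : Convex ℝ (coneFiber K c) := by
  rintro y₁ ⟨t₁, ht₁, v₁, hv₁, h₁⟩ y₂ ⟨t₂, ht₂, v₂, hv₂, h₂⟩ a b ha hb hab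
  obtain ⟨v, hv, hsum⟩ :=
    hK.exists_mem_add_smul_eq hv₁ hv₂ (mul_nonneg ha ht₁) (mul_nonneg hb ht₂)
  refine ⟨a * t₁ + b * t₂, by positivity, v, hv, ?_⟩
  rw [hsum, mul_smul, mul_smul, h₁, h₂]
  ext <;> simp [← add_smul, hab]

theorem IsCompact.coneFiber [NormedAddCommGroup E] [NormedSpace ℝ E] [NormedAddCommGroup F]
    [NormedSpace ℝ F] {K : Set (E × F)} (hK : IsCompact K) (h0 : ∀ v ∈ K, v.1 ≠ 0) (c : E) :
    IsCompact (coneFiber K c) := by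
  rcases K.eq_empty_or_nonempty with rfl | hKne
  · simp [_root_.coneFiber]
  obtain ⟨v₀, hv₀, hmin⟩ := hK.exists_isMinOn hKne continuous_fst.norm.continuousOn
  have hδ : 0 < ‖v₀.1‖ := norm_pos_iff.2 (h0 v₀ hv₀)
  -- the scaling factor `t` is at most `‖c‖ / min_K ‖v.1‖`
  have hfiber : _root_.coneFiber K c = (fun p : ℝ × (E × F) => (p.1 • p.2).2) ''
      ((Icc 0 (‖c‖ / ‖v₀.1‖) ×ˢ K) ∩ {p | (p.1 • p.2).1 = c}) := by
    ext y
    constructor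
    · rintro ⟨t, ht, v, hv, htv⟩
      refine ⟨(t, v), ⟨⟨⟨ht, ?_⟩, hv⟩, congrArg Prod.fst htv⟩, congrArg Prod.snd htv⟩
      rw [le_div_iff₀ hδ]
      calc t * ‖v₀.1‖ ≤ t * ‖v.1‖ := mul_le_mul_of_nonneg_left (hmin hv) ht
        _ = ‖c‖ := by rw [← norm_smul_of_nonneg ht, ← Prod.smul_fst, htv]
    · rintro ⟨⟨t, v⟩, ⟨⟨⟨ht, -⟩, hv⟩, hc⟩, rfl⟩
      exact ⟨t, ht, v, hv, Prod.ext hc rfl⟩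
  rw [hfiber]
  exact ((isCompact_Icc.prod hK).inter_right (isClosed_eq (by fun_prop) continuous_const)).image
    (by fun_prop)

end ConeFiber

section Measures

variable {α E : Type*} [MeasurableSpace α] [NormedAddCommGroup E] [NormedSpace ℝ E]
  [CompleteSpace E]

theorem exists_smul_mem_eq_integral {μ : Measure α} [IsFiniteMeasure μ] {K : Set E}
    (hKc : Convex ℝ K) (hKcl : IsClosed K) (hK : K.Nonempty) {f : α → E}
    (hf : Integrable f μ) (hfK : ∀ᵐ x ∂μ, f x ∈ K) :
    ∃ t : ℝ, 0 ≤ t ∧ ∃ v ∈ K, t • v = ∫ x, f x ∂μ := by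
  rcases eq_zero_or_neZero μ with rfl | _
  · obtain ⟨v, hv⟩ := hK
    exact ⟨0, le_rfl, v, hv, by simp⟩
  · exact ⟨μ.real univ, measureReal_nonneg, _, hKc.average_mem hKcl hfK hf,
      measure_smul_average μ f⟩

theorem exists_isProbabilityMeasure_integral_eq_of_mem_convexHull
    [MeasurableSingletonClass α] {f : α → E} {s : Set α} {v : E}
    (hv : v ∈ convexHull ℝ (f '' s)) :
    ∃ μ : Measure α, IsProbabilityMeasure μ ∧ μ sᶜ = 0 ∧ ∫ x, f x ∂μ = v := by
  obtain ⟨ι, _, z, w, hzs, -, hw, hw1, rfl⟩ := eq_pos_convex_span_of_mem_convexHull hv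
  choose ξ hξs hξ using fun i => hzs (Set.mem_range_self i)
  refine ⟨∑ i, ENNReal.ofReal (w i) • Measure.dirac (ξ i), ⟨?_⟩, ?_, ?_⟩
  · simp [← ENNReal.ofReal_sum_of_nonneg fun i _ => (hw i).le, hw1]
  · simp [hξs]
  · rw [integral_finsetSum_measure fun i _ =>
      (integrable_dirac enorm_lt_top).smul_measure ENNReal.ofReal_ne_top]
    simp [integral_smul_measure, (hw _).le, hξ]

end Measures

theorem ContinuousOn.integrable_of_measure_compl_eq_zero {X E : Type*} [TopologicalSpace X]
    [MeasurableSpace X] [OpensMeasurableSpace X] [T2Space X] [NormedAddCommGroup E]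
    {μ : Measure X} [IsFiniteMeasure μ] {f : X → E} {s : Set X} (hf : ContinuousOn f s)
    (hs : IsCompact s) (hμ : μ sᶜ = 0) : Integrable f μ := by
  rw [← Measure.restrict_eq_self_of_ae_mem (ae_iff.2 hμ : ∀ᵐ x ∂μ, x ∈ s)]
  exact hf.integrableOn_compact hs

namespace IsChebyshevSystem

variable {A B : ℝ}

theorem eq_zero_of_sum_smul_eq_zero {m : ℕ} {Ψ : Fin (m + 1) → ℝ → ℝ}
    (hΨ : IsChebyshevSystem A B Ψ) {x : Fin (m + 2) → ℝ} (hx : StrictMono x)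
    (hxI : ∀ j, x j ∈ Icc A B) {w : Fin (m + 2) → ℝ} (hw : ∀ j, 0 ≤ w j)
    (hsum : ∑ j, w j • (fun i => Ψ i (x j)) = 0) : w = 0 := by
  set M : Matrix (Fin (m + 1)) (Fin (m + 1)) ℝ := .of fun i j => Ψ i (x j.succ)
  set u : Fin (m + 1) → ℝ := fun i => Ψ i (x 0)
  set v : Fin (m + 1) → ℝ := fun j => w j.succ
  have hM : 0 < M.det := hΨ _ (hx.comp Fin.strictMono_succ) fun j => hxI _
  have hMu : 0 < (M.updateCol 0 u).det := by
    convert hΨ _ (hx.comp (Fin.strictMono_succAbove 1)) fun j => hxI _ using 2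
    ext i j
    cases j using Fin.cases <;> simp [M, u]
  have hMw : M *ᵥ v = -w 0 • u := by
    rw [Fin.sum_univ_succ, add_eq_zero_iff_eq_neg'] at hsum
    ext i
    simpa [M, u, v, Matrix.mulVec, dotProduct, mul_comm] using congrFun hsum i
  have hcramer : M.det * v 0 = -w 0 * (M.updateCol 0 u).det := by
    have h := congrFun (M.cramer_eq_adjugate_mulVec (M *ᵥ v)) 0
    rw [Matrix.mulVec_mulVec, Matrix.adjugate_mul, Matrix.smul_mulVec, Matrix.one_mulVec,
      Matrix.cramer_apply, hMw, Matrix.det_updateCol_smul] at h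
    simpa using h.symm
  have hw0 : w 0 = 0 := by nlinarith [hw 0, hw 1, show v 0 = w 1 from rfl]
  have htail : v = 0 :=
    Matrix.eq_zero_of_mulVec_eq_zero hM.ne' (by rw [hMw, hw0, neg_zero, zero_smul])
  ext j
  cases j using Fin.cases with
  | zero => exact hw0
  | succ j => exact congrFun htail j

theorem eq_zero_of_sum_finset_smul_eq_zero {k : ℕ} (hk : 0 < k) (hAB : A < B)
    {Ψ : Fin k → ℝ → ℝ} (hΨ : IsChebyshevSystem A B Ψ) {T : Finset ℝ} (hTI : ↑T ⊆ Icc A B)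
    (hT : #T ≤ k + 1) {w : ℝ → ℝ} (hw : ∀ t ∈ T, 0 ≤ w t)
    (hsum : ∑ t ∈ T, w t • (fun i => Ψ i t) = 0) : ∀ t ∈ T, w t = 0 := by
  obtain ⟨m, rfl⟩ := Nat.exists_eq_add_one_of_ne_zero hk.ne'
  obtain ⟨S, hTS, hSI, hS⟩ := (Icc_infinite hAB).exists_superset_ncard_eq hTI T.finite_toSet
    (k := m + 2) (by rwa [ncard_coe_finset])
  have hSfin : S.Finite := finite_of_ncard_pos (by omega)
  have hScard : #hSfin.toFinset = m + 2 := by rw [← ncard_eq_toFinset_card S hSfin, hS]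
  set x := hSfin.toFinset.orderEmbOfFin hScard
  have hxI j : x j ∈ Icc A B :=
    hSI (hSfin.mem_toFinset.1 (hSfin.toFinset.orderEmbOfFin_mem hScard j))
  set W : ℝ → ℝ := (T : Set ℝ).indicator w
  have hWsum : ∑ j, W (x j) • (fun i => Ψ i (x j)) = 0 :=
    calc ∑ j, W (x j) • (fun i => Ψ i (x j))
        = ∑ t ∈ hSfin.toFinset, W t • (fun i => Ψ i t) := by
          rw [← map_orderEmbOfFin_univ _ hScard, sum_map]; rfl
      _ = ∑ t ∈ T, w t • (fun i => Ψ i t) :=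
          sum_indicator_subset_of_eq_zero w (fun t a => a • fun i => Ψ i t)
            (fun t ht => hSfin.mem_toFinset.2 (hTS ht)) fun _ => zero_smul _ _
      _ = 0 := hsum
  have hWx : W ∘ x = 0 := eq_zero_of_sum_smul_eq_zero hΨ x.strictMono hxI
    (fun j => indicator_nonneg (fun t ht => hw t ht) (x j)) hWsum
  intro t ht
  obtain ⟨j, rfl⟩ : t ∈ Set.range x := by simpa [x] using hTS ht
  simpa [W, ht] using congrFun hWx j

theorem zero_notMem_convexHull {k : ℕ} (hk : 0 < k) (hAB : A < B) {Ψ : Fin k → ℝ → ℝ}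
    (hΨ : IsChebyshevSystem A B Ψ) :
    (0 : Fin k → ℝ) ∉ convexHull ℝ ((fun t i => Ψ i t) '' Icc A B) := by
  classical
  intro h0
  obtain ⟨ι, _, z, w, hzs, hai, hw, hw1, hwz⟩ := eq_pos_convex_span_of_mem_convexHull h0
  choose ξ hξI hξ using fun i => hzs (Set.mem_range_self i)
  have hcard : #(Finset.univ.image ξ) ≤ k + 1 := card_image_le.trans <| by
    simpa using hai.card_le_finrank_succ.trans (Nat.succ_le_succ (Submodule.finrank_le _))
  -- the total weight sitting at each point `ξ i`
  set W : ℝ → ℝ := fun t => ∑ i with ξ i = t, w i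
  have hW : ∀ t ∈ Finset.univ.image ξ, W t = 0 := by
    refine eq_zero_of_sum_finset_smul_eq_zero hk hAB hΨ (by simpa [Set.subset_def] using hξI)
      hcard (fun t _ => sum_nonneg fun i _ => (hw i).le) ?_
    rw [← hwz, ← sum_fiberwise_of_maps_to fun i _ => mem_image_of_mem ξ (mem_univ i)]
    refine sum_congr rfl fun t _ => ?_
    rw [sum_smul]
    refine sum_congr rfl fun i hi => ?_
    rw [← hξ i, (mem_filter.1 hi).2]
  have : ∑ i, w i = 0 := by
    rw [← sum_fiberwise_of_maps_to (fun i _ => mem_image_of_mem ξ (mem_univ i))]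
    exact sum_eq_zero hW
  simp [hw1] at this

end IsChebyshevSystem

section Feasible

variable {A B : ℝ} {k : ℕ} {Ψ : Fin k → ℝ → ℝ} {Ω : ℝ → ℝ}

theorem isFeasible_and_integral_eq_iff (hΨ : ∀ i, ContinuousOn (Ψ i) (Icc A B))
    (hΩ : ContinuousOn Ω (Icc A B)) {σ : Measure ℝ} [IsFiniteMeasure σ]
    (hσ : σ (Icc A B)ᶜ = 0) {c : Fin k → ℝ} {y : ℝ} :
    (IsFeasible A B Ψ c σ ∧ ∫ x, Ω x ∂σ = y) ↔ ∫ x, ((fun i => Ψ i x), Ω x) ∂σ = (c, y) := by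
  have hΨσ i := (hΨ i).integrable_of_measure_compl_eq_zero isCompact_Icc hσ
  have hΩσ := hΩ.integrable_of_measure_compl_eq_zero isCompact_Icc hσ
  rw [integral_pair (Integrable.of_eval hΨσ) hΩσ, Prod.mk.injEq, funext_iff]
  simp [IsFeasible, eval_integral hΨσ, hσ, ‹IsFiniteMeasure σ›]

theorem setOf_isFeasible_integral_eq_coneFiber (hAB : A ≤ B)
    (hΨ : ∀ i, ContinuousOn (Ψ i) (Icc A B)) (hΩ : ContinuousOn Ω (Icc A B)) (c : Fin k → ℝ) :
    {y | ∃ σ : Measure ℝ, IsFeasible A B Ψ c σ ∧ ∫ x, Ω x ∂σ = y} =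
      coneFiber (convexHull ℝ ((fun x => ((fun i => Ψ i x), Ω x)) '' Icc A B)) c := by
  have hφ : ContinuousOn (fun x => ((fun i => Ψ i x), Ω x)) (Icc A B) :=
    (continuousOn_pi.2 hΨ).prodMk hΩ
  ext y
  constructor
  · rintro ⟨σ, hσ, rfl⟩
    have := hσ.1
    have hσI : ∀ᵐ x ∂σ, x ∈ Icc A B := ae_iff.2 hσ.2.1
    obtain ⟨t, ht, v, hv, htv⟩ := exists_smul_mem_eq_integral (convex_convexHull ℝ _)
      (isCompact_Icc.image_of_continuousOn hφ).convexHull.isClosed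
      (((Set.nonempty_Icc.2 hAB).image _).convexHull)
      (hφ.integrable_of_measure_compl_eq_zero isCompact_Icc hσ.2.1)
      (hσI.mono fun x hx => subset_convexHull ℝ _ (mem_image_of_mem _ hx))
    exact ⟨t, ht, v, hv, htv.trans ((isFeasible_and_integral_eq_iff hΨ hΩ hσ.2.1).1 ⟨hσ, rfl⟩)⟩
  · rintro ⟨t, ht, v, hv, htv⟩
    obtain ⟨μ, _, hμI, hμv⟩ := exists_isProbabilityMeasure_integral_eq_of_mem_convexHull hv
    have hσI : (t.toNNReal • μ) (Icc A B)ᶜ = 0 := by simp [hμI]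
    refine ⟨t.toNNReal • μ, (isFeasible_and_integral_eq_iff hΨ hΩ hσI).2 ?_⟩
    rw [integral_smul_nnreal_measure, hμv, NNReal.smul_def, Real.coe_toNNReal t ht, htv]

end Feasible

/-- If `{Ψ₀,…,Ψ_{k-1}}` is a Chebyshev system on `[A,B]` and the feasible set of measures
with prescribed `Ψ`-moments `c⁰` is nonempty, then the set of values `∫ Ω dσ` over the
feasible set is a nonempty compact interval `[γ⁻, γ⁺]`. -/
theorem moment_range_is_compact_interval
    {k : ℕ} (hk : 0 < k) (A B : ℝ) (hAB : A < B)
    (Ψ : Fin k → ℝ → ℝ) (Ω : ℝ → ℝ)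
    (hcontΨ : ∀ i, ContinuousOn (Ψ i) (Set.Icc A B))
    (hcontΩ : ContinuousOn Ω (Set.Icc A B))
    (hCheb : IsChebyshevSystem A B Ψ)
    (c : Fin k → ℝ)
    (hS : ∃ σ : Measure ℝ, IsFeasible A B Ψ c σ) :
    ∃ γm γp : ℝ, γm ≤ γp ∧
      {y : ℝ | ∃ σ : Measure ℝ, IsFeasible A B Ψ c σ ∧ ∫ x, Ω x ∂σ = y} =
        Set.Icc γm γp := by
  obtain ⟨σ, hσ⟩ := hS
  have hne : {y | ∃ σ : Measure ℝ, IsFeasible A B Ψ c σ ∧ ∫ x, Ω x ∂σ = y}.Nonempty :=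
    ⟨_, σ, hσ, rfl⟩
  rw [setOf_isFeasible_integral_eq_coneFiber hAB.le hcontΨ hcontΩ] at hne ⊢
  set K := convexHull ℝ ((fun x => ((fun i => Ψ i x), Ω x)) '' Icc A B)
  have hK : IsCompact K :=
    (isCompact_Icc.image_of_continuousOn ((continuousOn_pi.2 hcontΨ).prodMk hcontΩ)).convexHull
  have hK0 : ∀ v ∈ K, v.1 ≠ 0 := fun v hv h => hCheb.zero_notMem_convexHull hk hAB <| by
    have := mem_image_of_mem (LinearMap.fst ℝ (Fin k → ℝ) ℝ) hv
    rwa [LinearMap.image_convexHull, image_image, LinearMap.fst_apply, h] at this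
  have hcomp : IsCompact (coneFiber K c) := hK.coneFiber hK0 c
  exact ⟨_, _, csInf_le_csSup hne hcomp.bddBelow hcomp.bddAbove,
    eq_Icc_of_connected_compact ⟨hne, ((convex_convexHull ℝ _).coneFiber c).isPreconnected⟩ hcomp⟩
end
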